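/- In the Lambek–Grishin calculus LG (even with all Grishin class I and class IV interaction rules), for atomic formulas A and i, the sequent A ⊢ (A ∘− i) ⊗ i is not derivable. -/

import Mathlib

/-- Formulas of the Lambek–Grishin calculus with units: atoms, the units 1 and
⊥, the residuated family ⊗, ⊸, ∘− and the dual residuated family ⅋ (par) with
its co-implications ↽ and ⇁. -/
inductive Fm where
  | atom : ℕ → Fm
  | one : Fm                 -- 1
  | bot : Fm                 -- ⊥
  | tens : Fm → Fm → Fm      -- A ⊗ B
  | limp : Fm → Fm → Fm      -- A ⊸ B
  | rimp : Fm → Fm → Fm      -- A ∘− B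
  | par : Fm → Fm → Fm       -- A ⅋ B
  | lcoimp : Fm → Fm → Fm    -- A ↽ B
  | rcoimp : Fm → Fm → Fm    -- A ⇁ B
  deriving DecidableEq

/-- Structures: formulas, the empty structure ε and the structural connectives
∘, <, > . -/
inductive St where
  | of : Fm → St
  | eps : St
  | comma : St → St → St     -- ∘
  | lt : St → St → St        -- <
  | gt : St → St → St        -- >
  deriving DecidableEq

/-- Derivability in the display sequent calculus. -/
inductive Deriv : St → St → Prop
  -- axiom
  | ax (A : Fm) : Deriv (St.of A) (St.of A)
  -- logical rules for the units
  | lone {Δ} : Deriv St.eps Δ → Deriv (St.of Fm.one) Δ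
  | rone : Deriv St.eps (St.of Fm.one)
  | lbot : Deriv (St.of Fm.bot) St.eps
  | rbot {Γ} : Deriv Γ St.eps → Deriv Γ (St.of Fm.bot)
  -- logical rules for ⊗, ⊸, ∘−
  | ltens {A B Δ} : Deriv (St.comma (St.of A) (St.of B)) Δ → Deriv (St.of (Fm.tens A B)) Δ
  | rtens {A B Γ₁ Γ₂} : Deriv Γ₁ (St.of A) → Deriv Γ₂ (St.of B) →
      Deriv (St.comma Γ₁ Γ₂) (St.of (Fm.tens A B))
  | llimp {A B Γ Δ} : Deriv Γ (St.of A) → Deriv (St.of B) Δ →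
      Deriv (St.of (Fm.limp A B)) (St.gt Γ Δ)
  | rlimp {A B Γ} : Deriv Γ (St.gt (St.of A) (St.of B)) → Deriv Γ (St.of (Fm.limp A B))
  | lrimp {A B Γ Δ} : Deriv (St.of A) Δ → Deriv Γ (St.of B) →
      Deriv (St.of (Fm.rimp A B)) (St.lt Δ Γ)
  | rrimp {A B Γ} : Deriv Γ (St.lt (St.of A) (St.of B)) → Deriv Γ (St.of (Fm.rimp A B))
  -- logical rules for ⅋, ↽, ⇁
  | lpar {A B Δ₁ Δ₂} : Deriv (St.of A) Δ₁ → Deriv (St.of B) Δ₂ →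
      Deriv (St.of (Fm.par A B)) (St.comma Δ₁ Δ₂)
  | rpar {A B Γ} : Deriv Γ (St.comma (St.of A) (St.of B)) → Deriv Γ (St.of (Fm.par A B))
  | lrcoimp {A B Δ} : Deriv (St.gt (St.of A) (St.of B)) Δ → Deriv (St.of (Fm.rcoimp A B)) Δ
  | rrcoimp {A B Γ Δ} : Deriv (St.of A) Δ → Deriv Γ (St.of B) →
      Deriv (St.gt Δ Γ) (St.of (Fm.rcoimp A B))
  | llcoimp {A B Δ} : Deriv (St.lt (St.of A) (St.of B)) Δ → Deriv (St.of (Fm.lcoimp A B)) Δ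
  | rlcoimp {A B Γ Δ} : Deriv Γ (St.of A) → Deriv (St.of B) Δ →
      Deriv (St.lt Γ Δ) (St.of (Fm.lcoimp A B))
  -- display rules (residuation): Γ₁ ∘ Γ₂ ⊢ Δ ⇔ Γ₁ ⊢ Δ < Γ₂ ⇔ Γ₂ ⊢ Γ₁ > Δ
  | rc1 {Γ₁ Γ₂ Δ} : Deriv (St.comma Γ₁ Γ₂) Δ → Deriv Γ₁ (St.lt Δ Γ₂)
  | rc1' {Γ₁ Γ₂ Δ} : Deriv Γ₁ (St.lt Δ Γ₂) → Deriv (St.comma Γ₁ Γ₂) Δ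
  | rc2 {Γ₁ Γ₂ Δ} : Deriv (St.comma Γ₁ Γ₂) Δ → Deriv Γ₂ (St.gt Γ₁ Δ)
  | rc2' {Γ₁ Γ₂ Δ} : Deriv Γ₂ (St.gt Γ₁ Δ) → Deriv (St.comma Γ₁ Γ₂) Δ
  -- display rules (dual residuation): Γ ⊢ Δ₁ ∘ Δ₂ ⇔ Γ < Δ₂ ⊢ Δ₁ ⇔ Δ₁ > Γ ⊢ Δ₂
  | drc1 {Γ Δ₁ Δ₂} : Deriv Γ (St.comma Δ₁ Δ₂) → Deriv (St.lt Γ Δ₂) Δ₁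
  | drc1' {Γ Δ₁ Δ₂} : Deriv (St.lt Γ Δ₂) Δ₁ → Deriv Γ (St.comma Δ₁ Δ₂)
  | drc2 {Γ Δ₁ Δ₂} : Deriv Γ (St.comma Δ₁ Δ₂) → Deriv (St.gt Δ₁ Γ) Δ₂
  | drc2' {Γ Δ₁ Δ₂} : Deriv (St.gt Δ₁ Γ) Δ₂ → Deriv Γ (St.comma Δ₁ Δ₂)
  -- Grishin class IV interaction rules (mixed associativity and commutativity)
  | gr1 {V W X Y} : Deriv (St.comma V W) (St.comma X Y) → Deriv (St.comma (St.gt X V) W) Y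
  | gr2 {V W X Y} : Deriv (St.comma V W) (St.comma X Y) → Deriv (St.comma V (St.gt X W)) Y
  | gr3 {V W X Y} : Deriv (St.comma V W) (St.comma X Y) → Deriv (St.comma V (St.lt W Y)) X
  | gr4 {V W X Y} : Deriv (St.comma V W) (St.comma X Y) → Deriv (St.comma (St.lt V Y) W) X
  -- Grishin class I interaction rules (the converse directions)
  | gr1' {V W X Y} : Deriv (St.comma (St.gt X V) W) Y → Deriv (St.comma V W) (St.comma X Y)
  | gr2' {V W X Y} : Deriv (St.comma V (St.gt X W)) Y → Deriv (St.comma V W) (St.comma X Y)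
  | gr3' {V W X Y} : Deriv (St.comma V (St.lt W Y)) X → Deriv (St.comma V W) (St.comma X Y)
  | gr4' {V W X Y} : Deriv (St.comma (St.lt V Y) W) X → Deriv (St.comma V W) (St.comma X Y)

/-!
LG, with all Grishin interaction rules, is sound for Boolean-valued semantics: read `⊗`, `⅋` as
`⊓`, `⊔`, the implications as `⇨` and the co-implications as `\`, and each structural connective
as its formula counterpart on the side where it occurs. Mixed associativity and commutativity then
become the Boolean identity `(a ⊓ b) \ c ≤ d ↔ a ⊓ b ≤ c ⊔ d`. Under the valuation making `A` true
and `i` false, `A` is true while `(A ∘− i) ⊗ i` is false.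
-/

variable {α : Type*} [BooleanAlgebra α]

def Fm.eval (v : ℕ → α) : Fm → α
  | atom k => v k
  | one => ⊤
  | bot => ⊥
  | tens a b => a.eval v ⊓ b.eval v
  | limp a b => a.eval v ⇨ b.eval v
  | rimp a b => b.eval v ⇨ a.eval v
  | par a b => a.eval v ⊔ b.eval v
  | lcoimp a b => a.eval v \ b.eval v
  | rcoimp a b => b.eval v \ a.eval v

mutual

def St.evalL (v : ℕ → α) : St → α
  | of F => F.eval v
  | eps => ⊤
  | comma Γ Δ => Γ.evalL v ⊓ Δ.evalL v
  | lt Γ Δ => Γ.evalL v \ Δ.evalR v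
  | gt Δ Γ => Γ.evalL v \ Δ.evalR v

def St.evalR (v : ℕ → α) : St → α
  | of F => F.eval v
  | eps => ⊥
  | comma Δ₁ Δ₂ => Δ₁.evalR v ⊔ Δ₂.evalR v
  | lt Δ Γ => Γ.evalL v ⇨ Δ.evalR v
  | gt Γ Δ => Γ.evalL v ⇨ Δ.evalR v

end

theorem Deriv.evalL_le_evalR (v : ℕ → α) {Γ Δ : St} (d : Deriv Γ Δ) :
    Γ.evalL v ≤ Δ.evalR v := by
  induction d with
  | ax | rone | lbot => exact le_rfl
  | lone _ ih | rbot _ ih | ltens _ ih | rlimp _ ih | rrimp _ ih | rpar _ ih | lrcoimp _ ih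
    | llcoimp _ ih => exact ih
  | rtens _ _ ih₁ ih₂ => exact inf_le_inf ih₁ ih₂
  | llimp _ _ ih₁ ih₂ => exact himp_le_himp ih₁ ih₂
  | lrimp _ _ ih₁ ih₂ => exact himp_le_himp ih₂ ih₁
  | lpar _ _ ih₁ ih₂ => exact sup_le_sup ih₁ ih₂
  | rrcoimp _ _ ih₁ ih₂ => exact sdiff_le_sdiff ih₂ ih₁
  | rlcoimp _ _ ih₁ ih₂ => exact sdiff_le_sdiff ih₁ ih₂
  | rc1 _ ih => exact le_himp_iff.2 ih
  | rc1' _ ih => exact le_himp_iff.1 ih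
  | rc2 _ ih => exact le_himp_iff'.2 ih
  | rc2' _ ih => exact le_himp_iff'.1 ih
  | drc1 _ ih => exact sdiff_le_iff'.2 ih
  | drc1' _ ih => exact sdiff_le_iff'.1 ih
  | drc2 _ ih => exact sdiff_le_iff.2 ih
  | drc2' _ ih => exact sdiff_le_iff.1 ih
  | gr1 _ ih => exact (sdiff_inf_right_comm _ _ _).trans_le (sdiff_le_iff.2 ih)
  | gr2 _ ih => exact (inf_sdiff_assoc _ _ _).symm.trans_le (sdiff_le_iff.2 ih)
  | gr3 _ ih => exact (inf_sdiff_assoc _ _ _).symm.trans_le (sdiff_le_iff'.2 ih)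
  | gr4 _ ih => exact (sdiff_inf_right_comm _ _ _).trans_le (sdiff_le_iff'.2 ih)
  | gr1' _ ih => exact sdiff_le_iff.1 ((sdiff_inf_right_comm _ _ _).symm.trans_le ih)
  | gr2' _ ih => exact sdiff_le_iff.1 ((inf_sdiff_assoc _ _ _).trans_le ih)
  | gr3' _ ih => exact sdiff_le_iff'.1 ((inf_sdiff_assoc _ _ _).trans_le ih)
  | gr4' _ ih => exact sdiff_le_iff'.1 ((sdiff_inf_right_comm _ _ _).symm.trans_le ih)

/-- In the Lambek–Grishin calculus LG, even with all Grishin class I and class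
IV interaction rules, for distinct atomic formulas A and i the sequent
A ⊢ (A ∘− i) ⊗ i is not derivable. -/
theorem not_derivable_atom (n m : ℕ) (h : n ≠ m) :
    ¬ Deriv (St.of (Fm.atom n))
        (St.of (Fm.tens (Fm.rimp (Fm.atom n) (Fm.atom m)) (Fm.atom m))) := by
  intro d
  have sound : n = n → (m = n → n = n) ∧ m = n := d.evalL_le_evalR (· = n)
  exact h (sound rfl).2.symm
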